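/- arXiv:2303.00839 — 5 statements merged into one kernel-verified Lean document; each statement's English description precedes it below -/
import Mathlib

section
/- For any subset Γ ⊆ Λ, equipped with the partial order inherited from Λ, the subgroup H_Γ of Wr_{λ∈Λ} H_λ is isomorphic as a group to the generalized wreath product Wr_{γ∈Γ} H_γ. -/
open scoped Classical

noncomputable section

namespace GW

/-- The support of an element of a dependent product of groups. -/
def supp {Λ : Type*} {H : Λ → Type*} [∀ l, One (H l)] (x : ∀ l, H l) : Set Λ :=
  {l | x l ≠ 1}

/-- The restricted direct product: functions with finite support. -/
abbrev S (Λ : Type*) (H : Λ → Type*) [∀ l, One (H l)] : Type _ :=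
  {x : ∀ l, H l // (supp x).Finite}

variable {Λ : Type*} [PartialOrder Λ] (H : Λ → Type*) [∀ l, Group (H l)]

/-- The underlying function of the permutation `ξ_h`. -/
def xiFun (l : Λ) (h : H l) (x : ∀ m, H m) : ∀ m, H m :=
  Function.update x l (if ∀ n, l < n → x n = 1 then h * x l else x l)

lemma xiFun_apply_ne (l : Λ) (h : H l) (x : ∀ m, H m) {m : Λ} (hm : m ≠ l) :
    xiFun H l h x m = x m := Function.update_of_ne hm _ x

lemma xiFun_support (l : Λ) (h : H l) (x : ∀ m, H m) :
    supp (xiFun H l h x) ⊆ insert l (supp x) := by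
  intro m hm
  rcases eq_or_ne m l with rfl | hne
  · exact Set.mem_insert _ _
  · refine Set.mem_insert_of_mem _ ?_
    have : xiFun H l h x m ≠ 1 := hm
    rwa [xiFun_apply_ne H l h x hne] at this

lemma xiFun_cond (l : Λ) (h : H l) (x : ∀ m, H m) :
    (∀ n, l < n → xiFun H l h x n = 1) ↔ ∀ n, l < n → x n = 1 := by
  constructor
  · intro hc n hn
    have := hc n hn
    rwa [xiFun_apply_ne H l h x hn.ne'] at this
  · intro hc n hn
    rw [xiFun_apply_ne H l h x hn.ne']
    exact hc n hn

lemma xiFun_inv (l : Λ) (h : H l) (x : ∀ m, H m) :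
    xiFun H l h⁻¹ (xiFun H l h x) = x := by
  funext m
  rcases eq_or_ne m l with rfl | hne
  · have hyl : xiFun H m h x m = if ∀ n, m < n → x n = 1 then h * x m else x m := by
      simp [xiFun]
    show Function.update (xiFun H m h x) m
      (if ∀ n, m < n → xiFun H m h x n = 1 then h⁻¹ * xiFun H m h x m
        else xiFun H m h x m) m = x m
    rw [Function.update_self]
    by_cases hc : ∀ n, m < n → x n = 1
    · rw [if_pos ((xiFun_cond H m h x).2 hc), hyl, if_pos hc, inv_mul_cancel_left]
    · rw [if_neg (fun hcy => hc ((xiFun_cond H m h x).1 hcy)), hyl, if_neg hc]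
  · rw [xiFun_apply_ne H l h⁻¹ _ hne, xiFun_apply_ne H l h x hne]

/-- The permutation `ξ_h` of the restricted product `S`. -/
def xi (l : Λ) (h : H l) : Equiv.Perm (S Λ H) where
  toFun x := ⟨xiFun H l h x.1, (x.2.insert l).subset (xiFun_support H l h x.1)⟩
  invFun x := ⟨xiFun H l h⁻¹ x.1, (x.2.insert l).subset (xiFun_support H l h⁻¹ x.1)⟩
  left_inv x := Subtype.ext (xiFun_inv H l h x.1)
  right_inv x := Subtype.ext (by simpa using xiFun_inv H l h⁻¹ x.1)

/-- The generalized wreath product `Wr_{λ∈Λ} H_λ` as a subgroup of `Perm S`. -/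
def Wr (Λ : Type*) [PartialOrder Λ] (H : Λ → Type*) [∀ l, Group (H l)] :
    Subgroup (Equiv.Perm (S Λ H)) :=
  Subgroup.closure {e | ∃ (l : Λ) (h : H l), e = xi H l h}

/-- For `Γ ⊆ Λ`, the subgroup `H_Γ` of `Perm S` generated by the `ξ_h` with `h ∈ H_γ`, `γ ∈ Γ`. -/
def HSub (Γ : Set Λ) : Subgroup (Equiv.Perm (S Λ H)) :=
  Subgroup.closure {e | ∃ (l : Λ) (h : H l), l ∈ Γ ∧ e = xi H l h}

/-- For `Γ ⊆ Λ`, the subgroup `D_Γ` of `H_Λ` of elements fixing all coordinates outside `Γ`. -/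
def D (Γ : Set Λ) : Subgroup ↥(Wr Λ H) where
  carrier := {g | ∀ (x : S Λ H) (l : Λ), l ∉ Γ → ((g : Equiv.Perm (S Λ H)) x).1 l = x.1 l}
  one_mem' := fun _ _ _ => rfl
  mul_mem' := by
    intro a b ha hb x l hl
    have h1 := ha ((b : Equiv.Perm (S Λ H)) x) l hl
    have h2 := hb x l hl
    simpa [h2] using h1
  inv_mem' := by
    intro a ha x l hl
    have := ha (((a : Equiv.Perm (S Λ H)))⁻¹ x) l hl
    simpa using this.symm

end GW

end

/-! The generators `ξ_h`, `h ∈ H_γ`, `γ ∈ Γ`, never change coordinates outside `Γ`, and at a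
point `x` they can only move the *active* coordinates: those `γ ∈ Γ` such that every coordinate of
`x` above `γ` and outside `Γ` is trivial. The active coordinates form an up-set of `Γ`, so
overwriting them by the coordinates of `y ∈ S_Γ` gives maps `embed x : S_Γ → S_Λ` that intertwine
each `ξ_h` over `Λ` with the same `ξ_h` over `Γ`. Hence the pairs `(ξ_h^Λ, ξ_h^Γ)` generate a group
of pairs `(g, f)` with `g ∘ embed x = embed x ∘ f` for all `x`. Both projections are injective on
it: the images of the `embed x` cover `S_Λ` (take `y = x|_Γ`), and `embed 1` is injective. The
projections of this group are `H_Γ` and `Wr_{γ∈Γ} H_γ`. -/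

open Equiv Function

noncomputable def Subgroup.equivMapOfDomRestrictInjective {G N : Type*} [Group G] [Group N]
    (P : Subgroup G) (f : G →* N) (hf : Injective (f.domRestrict P)) : P ≃* P.map f :=
  (MonoidHom.ofInjective hf).trans (MulEquiv.subgroupCongr (MonoidHom.domRestrict_range P f))

namespace Equiv.Perm

variable {ι α β : Type*} (j : ι → β → α)

def intertwiners : Subgroup (Perm α × Perm β) where
  carrier := {p | ∀ i y, p.1 (j i y) = j i (p.2 y)}
  one_mem' _ _ := rfl
  mul_mem' {p q} hp hq i y := by
    simp only [Prod.fst_mul, Prod.snd_mul, Perm.mul_apply, hq i y, hp i (q.2 y)]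
  inv_mem' {p} hp i y := by
    simp only [Prod.fst_inv, Prod.snd_inv]
    rw [Perm.inv_eq_iff_eq, hp]
    simp

variable {j} {P : Subgroup (Perm α × Perm β)}

lemma injective_fst_domRestrict (hP : P ≤ intertwiners j) (hj : ∃ i, Injective (j i)) :
    Injective ((MonoidHom.fst _ _).domRestrict P) := by
  obtain ⟨i, hi⟩ := hj
  refine (injective_iff_map_eq_one _).2 fun p hp => ?_
  have hp1 : p.1.1 = 1 := hp
  refine Subtype.ext (Prod.ext hp1 (Perm.ext fun y => hi ?_))
  simpa [hp1] using (hP p.2 i y).symm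

lemma injective_snd_domRestrict (hP : P ≤ intertwiners j) (hj : Surjective (uncurry j)) :
    Injective ((MonoidHom.snd _ _).domRestrict P) := by
  refine (injective_iff_map_eq_one _).2 fun p hp => ?_
  have hp2 : p.1.2 = 1 := hp
  refine Subtype.ext (Prod.ext (Perm.ext fun x => ?_) hp2)
  obtain ⟨⟨i, y⟩, rfl⟩ := hj x
  simpa [hp2] using hP p.2 i y

noncomputable def mapFstEquivMapSnd (P : Subgroup (Perm α × Perm β)) (hP : P ≤ intertwiners j)
    (hinj : ∃ i, Injective (j i)) (hcov : Surjective (uncurry j)) :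
    P.map (MonoidHom.fst _ _) ≃* P.map (MonoidHom.snd _ _) :=
  (P.equivMapOfDomRestrictInjective _ (injective_fst_domRestrict hP hinj)).symm.trans
    (P.equivMapOfDomRestrictInjective _ (injective_snd_domRestrict hP hcov))

end Equiv.Perm

namespace GW

variable {Λ : Type*} [PartialOrder Λ] {H : Λ → Type*} [∀ l, Group (H l)]

lemma xi_apply_of_ne {l m : Λ} (h : H l) (x : S Λ H) (hm : m ≠ l) :
    (xi H l h x).1 m = x.1 m :=
  xiFun_apply_ne H l h x.1 hm

lemma xi_apply_self {l : Λ} (h : H l) (x : S Λ H) :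
    (xi H l h x).1 l = if ∀ n, l < n → x.1 n = 1 then h * x.1 l else x.1 l :=
  Function.update_self l _ x.1

variable (Γ : Set Λ)

def IsActive (x : ∀ l, H l) (l : Λ) : Prop :=
  l ∈ Γ ∧ ∀ η, l < η → η ∉ Γ → x η = 1

lemma IsActive.of_lt {x : ∀ l, H l} {l m : Λ} (hl : IsActive Γ x l) (hm : m ∈ Γ)
    (hlm : l < m) : IsActive Γ x m :=
  ⟨hm, fun η hη => hl.2 η (hlm.trans hη)⟩

lemma isActive_iff_mem {x : ∀ l, H l} (hx : ∀ l ∉ Γ, x l = 1) {l : Λ} :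
    IsActive Γ x l ↔ l ∈ Γ :=
  ⟨And.left, fun hl => ⟨hl, fun η _ => hx η⟩⟩

noncomputable def embed (x : S Λ H) (y : S Γ (fun γ : Γ => H γ)) : S Λ H :=
  ⟨fun l => if hl : IsActive Γ x.1 l then y.1 ⟨l, hl.1⟩ else x.1 l, by
    refine (x.2.union (y.2.image Subtype.val)).subset fun l hl => ?_
    by_cases ha : IsActive Γ x.1 l
    · exact Or.inr ⟨⟨l, ha.1⟩, by simpa [supp, ha] using hl, rfl⟩
    · exact Or.inl (by simpa [supp, ha] using hl)⟩

lemma embed_apply_of_isActive {x : S Λ H} {l : Λ} (hl : IsActive Γ x.1 l)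
    (y : S Γ (fun γ : Γ => H γ)) : (embed Γ x y).1 l = y.1 ⟨l, hl.1⟩ :=
  dif_pos hl

lemma embed_apply_of_not_isActive {x : S Λ H} {l : Λ} (hl : ¬IsActive Γ x.1 l)
    (y : S Γ (fun γ : Γ => H γ)) : (embed Γ x y).1 l = x.1 l :=
  dif_neg hl

def restrict (x : S Λ H) : S Γ (fun γ : Γ => H γ) :=
  ⟨fun γ => x.1 γ, x.2.preimage Subtype.val_injective.injOn⟩

lemma embed_restrict (x : S Λ H) : embed Γ x (restrict Γ x) = x :=
  Subtype.ext <| funext fun _ => dite_eq_right_iff.2 fun _ => rfl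

lemma embed_injective_of_eq_one {x : S Λ H} (hx : ∀ l ∉ Γ, x.1 l = 1) :
    Injective (embed Γ x) := by
  intro y₁ y₂ hy
  refine Subtype.ext (funext fun γ => ?_)
  have hγ : IsActive Γ x.1 γ := (isActive_iff_mem Γ hx).2 γ.2
  simpa [embed_apply_of_isActive Γ hγ] using congrArg (fun z : S Λ H => z.1 γ) hy

lemma embed_eq_one_above_iff {x : S Λ H} {l : Λ} (hl : IsActive Γ x.1 l)
    (y : S Γ (fun γ : Γ => H γ)) :
    (∀ n, l < n → (embed Γ x y).1 n = 1) ↔ ∀ n : Γ, ⟨l, hl.1⟩ < n → y.1 n = 1 := by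
  constructor
  · intro hy n hn
    simpa [embed_apply_of_isActive Γ (hl.of_lt Γ n.2 hn)] using hy n hn
  · intro hy n hn
    by_cases hnΓ : n ∈ Γ
    · rw [embed_apply_of_isActive Γ (hl.of_lt Γ hnΓ hn)]
      exact hy ⟨n, hnΓ⟩ hn
    · rw [embed_apply_of_not_isActive Γ fun ha => hnΓ ha.1]
      exact hl.2 n hn hnΓ

lemma exists_embed_ne_one_above {x : S Λ H} {l : Λ} (hl : l ∈ Γ) (ha : ¬IsActive Γ x.1 l)
    (y : S Γ (fun γ : Γ => H γ)) : ∃ n, l < n ∧ (embed Γ x y).1 n ≠ 1 := by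
  simp only [IsActive, hl, true_and, not_forall] at ha
  obtain ⟨n, hn, hnΓ, hxn⟩ := ha
  exact ⟨n, hn, by rwa [embed_apply_of_not_isActive Γ fun ha => hnΓ ha.1]⟩

lemma xi_embed {l : Λ} (hl : l ∈ Γ) (h : H l) (x : S Λ H) (y : S Γ (fun γ : Γ => H γ)) :
    xi H l h (embed Γ x y) = embed Γ x (xi _ ⟨l, hl⟩ h y) := by
  refine Subtype.ext (funext fun m => ?_)
  rcases eq_or_ne m l with rfl | hml
  · by_cases ha : IsActive Γ x.1 m
    · rw [xi_apply_self, embed_apply_of_isActive Γ ha, embed_apply_of_isActive Γ ha,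
        xi_apply_self]
      exact if_congr (embed_eq_one_above_iff Γ ha y) rfl rfl
    · obtain ⟨n, hn, hne⟩ := exists_embed_ne_one_above Γ hl ha y
      rw [xi_apply_self, if_neg fun hy => hne (hy n hn), embed_apply_of_not_isActive Γ ha,
        embed_apply_of_not_isActive Γ ha]
  · rw [xi_apply_of_ne h _ hml]
    by_cases ha : IsActive Γ x.1 m
    · rw [embed_apply_of_isActive Γ ha, embed_apply_of_isActive Γ ha,
        xi_apply_of_ne (H := fun γ : Γ => H γ) (l := ⟨l, hl⟩) h y (hml <| congrArg Subtype.val ·)]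
    · rw [embed_apply_of_not_isActive Γ ha, embed_apply_of_not_isActive Γ ha]

lemma uncurry_embed_surjective : Surjective (uncurry (embed (H := H) Γ)) :=
  fun x => ⟨(x, restrict Γ x), embed_restrict Γ x⟩

variable (H)

def xiPairs : Set (Perm (S Λ H) × Perm (S Γ (fun γ : Γ => H γ))) :=
  Set.range fun p : Σ γ : Γ, H γ => (xi H p.1 p.2, xi (fun γ : Γ => H γ) p.1 p.2)

lemma closure_xiPairs_le_intertwiners :
    Subgroup.closure (xiPairs H Γ) ≤ Perm.intertwiners (embed Γ) :=
  (Subgroup.closure_le _).2 <| by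
    rintro _ ⟨⟨γ, h⟩, rfl⟩ x y
    exact xi_embed Γ γ.2 h x y

lemma map_fst_closure_xiPairs :
    (Subgroup.closure (xiPairs H Γ)).map (MonoidHom.fst _ _) = HSub H Γ := by
  rw [MonoidHom.map_closure, HSub]
  congr 1
  ext e
  simp [xiPairs, eq_comm]

lemma map_snd_closure_xiPairs :
    (Subgroup.closure (xiPairs H Γ)).map (MonoidHom.snd _ _) = Wr Γ (fun γ : Γ => H γ) := by
  rw [MonoidHom.map_closure, Wr]
  congr 1
  ext e
  simp [xiPairs, eq_comm]

end GW

/-- for any `Γ ⊆ Λ` with the inherited partial order, the subgroup `H_Γ`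
of `Wr_{λ∈Λ} H_λ` is isomorphic to the generalized wreath product `Wr_{γ∈Γ} H_γ`. -/
theorem hsub_iso_wr {Λ : Type*} [PartialOrder Λ] (H : Λ → Type*) [∀ l, Group (H l)]
    (Γ : Set Λ) :
    Nonempty (↥(GW.HSub H Γ) ≃* ↥(GW.Wr ↥Γ (fun g : ↥Γ => H g.1))) := by
  have hinj : ∃ x, Injective (GW.embed (H := H) Γ x) :=
    ⟨⟨1, by simp [GW.supp]⟩, GW.embed_injective_of_eq_one Γ fun _ _ => rfl⟩
  exact ⟨(MulEquiv.subgroupCongr (GW.map_fst_closure_xiPairs H Γ)).symm.trans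
    ((Perm.mapFstEquivMapSnd _ (GW.closure_xiPairs_le_intertwiners H Γ) hinj
      (GW.uncurry_embed_surjective Γ)).trans
      (MulEquiv.subgroupCongr (GW.map_snd_closure_xiPairs H Γ)))⟩
end

section
/- Suppose Γ ⊆ Λ is downward closed (if γ ∈ Γ and λ ≤ γ then λ ∈ Γ). Then every element g of H_Λ = Wr_{λ∈Λ} H_λ preserves the equivalence relation ∼_Γ on S: for all x, y ∈ S, if x ∼_Γ y then g(x) ∼_Γ g(y). Consequently H_Λ acts on the quotient set S/∼_Γ. -/
open scoped Classical

/-- The equivalence relation `∼_Γ` on `S`: `x ∼_Γ y` iff `x` and `y` agree at every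
coordinate outside `Γ`. -/
def simSetoid {Λ : Type*} [PartialOrder Λ] (H : Λ → Type*) [∀ l, Group (H l)]
    (Γ : Set Λ) : Setoid (GW.S Λ H) where
  r x y := ∀ l ∉ Γ, x.1 l = y.1 l
  iseqv := ⟨fun _ _ _ => rfl, fun h l hl => (h l hl).symm,
    fun h1 h2 l hl => (h1 l hl).trans (h2 l hl)⟩

/-! The generator `ξ_h` with `h ∈ H_λ` changes only coordinate `λ`, and its effect there depends only
on the coordinates at or above `λ`. If `λ ∉ Γ` and `Γ` is downward closed, then no coordinate at or
above `λ` lies in `Γ`, so two `∼_Γ`-equivalent points are moved in the same way at `λ`. Hence every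
generator, together with its inverse `ξ_{h⁻¹}`, preserves `∼_Γ`, and so does the group they
generate. -/

namespace Setoid

variable {α : Type*} (s : Setoid α)

def invariantPerms : Subgroup (Equiv.Perm α) where
  carrier := {e | ∀ x y, s x y ↔ s (e x) (e y)}
  one_mem' _ _ := Iff.rfl
  mul_mem' ha hb x y := (hb x y).trans (ha _ _)
  inv_mem' {e} he x y := by simpa using (he (e⁻¹ x) (e⁻¹ y)).symm

variable {s} in
lemma mem_invariantPerms_of_rel {e : Equiv.Perm α} (he : ∀ x y, s x y → s (e x) (e y))
    (he_inv : ∀ x y, s x y → s (e⁻¹ x) (e⁻¹ y)) : e ∈ invariantPerms s :=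
  fun x y => ⟨he x y, fun h => by simpa using he_inv _ _ h⟩

def quotientPermHom : invariantPerms s →* Equiv.Perm (Quotient s) where
  toFun e := Quotient.congr e.1 e.2
  map_one' := by
    ext q
    induction q using Quotient.ind
    rfl
  map_mul' _ _ := by
    ext q
    induction q using Quotient.ind
    rfl

end Setoid

namespace GW

variable {Λ : Type*} [PartialOrder Λ] (H : Λ → Type*) [∀ l, Group (H l)]

lemma xiFun_apply_self (l : Λ) (h : H l) (x : ∀ m, H m) :
    xiFun H l h x l = if ∀ n, l < n → x n = 1 then h * x l else x l :=
  Function.update_self _ _ _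

lemma xiFun_apply_self_congr (l : Λ) (h : H l) {x y : ∀ m, H m}
    (hxy : ∀ n, l ≤ n → x n = y n) : xiFun H l h x l = xiFun H l h y l := by
  have hcond : (∀ n, l < n → x n = 1) ↔ ∀ n, l < n → y n = 1 :=
    forall₂_congr fun n hn => by rw [hxy n hn.le]
  simp only [xiFun_apply_self, hcond, hxy l le_rfl]

lemma xi_inv (l : Λ) (h : H l) : (xi H l h)⁻¹ = xi H l h⁻¹ :=
  Equiv.ext fun _ => rfl

variable {H}

lemma xi_rel_simSetoid {Γ : Set Λ} (hΓ : IsLowerSet Γ) (l : Λ) (h : H l) {x y : S Λ H}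
    (hxy : simSetoid H Γ x y) : simSetoid H Γ (xi H l h x) (xi H l h y) := by
  intro m hm
  rcases eq_or_ne m l with rfl | hne
  · exact xiFun_apply_self_congr H m h fun n hmn => hxy n (hΓ.compl hmn hm)
  · exact (xiFun_apply_ne H l h x.1 hne).trans
      ((hxy m hm).trans (xiFun_apply_ne H l h y.1 hne).symm)

lemma wr_le_invariantPerms {Γ : Set Λ} (hΓ : IsLowerSet Γ) :
    Wr Λ H ≤ (simSetoid H Γ).invariantPerms := by
  rw [Wr, Subgroup.closure_le]
  rintro _ ⟨l, h, rfl⟩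
  refine Setoid.mem_invariantPerms_of_rel (fun _ _ => xi_rel_simSetoid hΓ l h) ?_
  rw [xi_inv]
  exact fun _ _ => xi_rel_simSetoid hΓ l h⁻¹

end GW

/-- if `Γ ⊆ Λ` is downward closed, then every element of
`H_Λ = Wr_{λ∈Λ} H_λ` preserves `∼_Γ`; consequently `H_Λ` acts on the quotient `S/∼_Γ`. -/
theorem wr_preserves_sim {Λ : Type*} [PartialOrder Λ] (H : Λ → Type*) [∀ l, Group (H l)]
    (Γ : Set Λ) (hdc : ∀ ⦃g l : Λ⦄, g ∈ Γ → l ≤ g → l ∈ Γ) :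
    (∀ g ∈ GW.Wr Λ H, ∀ x y : GW.S Λ H,
      (∀ l ∉ Γ, x.1 l = y.1 l) → ∀ l ∉ Γ, (g x).1 l = (g y).1 l) ∧
    ∃ f : ↥(GW.Wr Λ H) →* Equiv.Perm (Quotient (simSetoid H Γ)),
      ∀ (g : ↥(GW.Wr Λ H)) (x : GW.S Λ H),
        f g (Quotient.mk (simSetoid H Γ) x) =
          Quotient.mk (simSetoid H Γ) ((g : Equiv.Perm (GW.S Λ H)) x) := by
  have hWr := GW.wr_le_invariantPerms (H := H) (Γ := Γ) fun _ _ hle hmem => hdc hmem hle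
  exact ⟨fun g hg x y => (hWr hg x y).1,
    (simSetoid H Γ).quotientPermHom.comp (Subgroup.inclusion hWr), fun _ _ => rfl⟩
end

section
/- (Silcock) Suppose every group H_λ (λ ∈ Λ) is a nonabelian simple group. Then every normal subgroup N of H_Λ = Wr_{λ∈Λ} H_λ is equal to D_Γ for some downward closed subset Γ ⊆ Λ (Γ is downward closed if γ ∈ Γ and λ ≤ γ imply λ ∈ Γ). -/
open scoped Classical

/-!
Let `Γ` be the set of levels `l` with `ξ(H_l) ⊆ N`. Elements of `H_Λ` are triangular: the
coordinates of `g x` strictly above `l` depend only on those of `x`, and `(g x)_l = f(x_{>l}) x_l`.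
If `l` is a minimal level moved by some `n ∈ N`, a conjugate of `n` moves level `l` at the trivial
point while still moving nothing below `l`; its commutator with a suitable `ξ_k`, `k ∈ H_l`, moves
level `l` only, and a second commutator is a nontrivial `ξ_b ∈ N`. As `H_l` is simple,
`ξ(H_l) ⊆ N`, i.e. `l ∈ Γ`. Applied to `⁅ξ_k, ξ_h⁆` with `k ∈ H_l`, `h ∈ H_ν`, `l < ν`, this shows
that `Γ` is downward closed, so `D_Γ` is normal. Since the `ξ`'s generate `H_Λ`, every element is
a product `d u` with `d ∈ N ∩ D_Γ` and `u ∈ D_{Λ∖Γ}`; and `u = 1` whenever `d u` lies in `N` (by the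
minimal-level argument) or in `D_Γ`. Hence `N = N ∩ D_Γ = D_Γ`.
-/

open scoped commutatorElement

theorem IsSimpleGroup.exists_commutatorElement_ne_one {G : Type*} [Group G] [IsSimpleGroup G]
    (hG : ∃ a b : G, a * b ≠ b * a) {a : G} (ha : a ≠ 1) : ∃ k : G, ⁅a, k⁆ ≠ 1 := by
  have hcenter : Subgroup.center G = ⊥ := by
    refine (IsSimpleGroup.eq_bot_or_eq_top_of_normal _ inferInstance).resolve_right fun htop => ?_
    obtain ⟨a, b, hab⟩ := hG
    exact hab (Subgroup.mem_center_iff.1 (htop ▸ Subgroup.mem_top b) a)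
  by_contra! hcomm
  refine ha (Subgroup.mem_bot.1 (hcenter ▸ Subgroup.mem_center_iff.2 fun k => ?_))
  exact (commutatorElement_eq_one_iff_mul_comm.1 (hcomm k)).symm

namespace GW

section RestrictedProduct

variable {Λ : Type*} {H : Λ → Type*} [∀ l, One (H l)]

instance : One (S Λ H) := ⟨⟨1, by simp [supp]⟩⟩

@[simp] lemma one_val : (1 : S Λ H).1 = 1 := rfl

lemma supp_update_one (x : ∀ l, H l) (ν : Λ) : supp (Function.update x ν 1) = supp x \ {ν} := by
  ext η
  rcases eq_or_ne η ν with rfl | hη <;> simp [supp, *]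

noncomputable def restrictTo (s : Set Λ) (x : S Λ H) : S Λ H :=
  ⟨s.piecewise x.1 1, x.2.subset fun η hη => by
    by_cases hs : η ∈ s <;> simp_all [supp, Set.piecewise_eq_of_mem, Set.piecewise_eq_of_notMem]⟩

lemma supp_restrictTo_subset (s : Set Λ) (x : S Λ H) : supp (restrictTo s x).1 ⊆ s := by
  intro η hη
  by_contra hs
  exact hη (Set.piecewise_eq_of_notMem _ _ _ hs)

end RestrictedProduct

variable {Λ : Type*} [PartialOrder Λ] {H : Λ → Type*} [∀ l, Group (H l)]

def TrivialAbove (l : Λ) (x : S Λ H) : Prop := ∀ η, l < η → x.1 η = 1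

lemma trivialAbove_one (l : Λ) : TrivialAbove l (1 : S Λ H) := fun _ _ => rfl

section Xi

variable {l : Λ} (h : H l) (x : S Λ H)

lemma xi_apply_ne {m : Λ} (hm : m ≠ l) : (xi H l h x).1 m = x.1 m := xiFun_apply_ne H l h x.1 hm

variable {x}

lemma xi_apply_of_trivialAbove (hx : TrivialAbove l x) :
    (xi H l h x).1 = Function.update x.1 l (h * x.1 l) := by
  change Function.update _ _ (ite _ _ _) = _
  rw [if_pos (c := ∀ η, l < η → x.1 η = 1) hx]

lemma xi_of_not_trivialAbove (hx : ¬ TrivialAbove l x) : xi H l h x = x := by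
  refine Subtype.ext ?_
  change Function.update _ _ (ite _ _ _) = _
  rw [if_neg (c := ∀ η, l < η → x.1 η = 1) hx, Function.update_eq_self]

lemma trivialAbove_xi_iff : TrivialAbove l (xi H l h x) ↔ TrivialAbove l x := xiFun_cond H l h x.1

end Xi

noncomputable def xiHom (l : Λ) : H l →* Wr Λ H where
  toFun h := ⟨xi H l h, Subgroup.subset_closure ⟨l, h, rfl⟩⟩
  map_one' := by
    refine Subtype.ext (Equiv.ext fun x => ?_)
    by_cases hx : TrivialAbove l x
    · exact Subtype.ext (by simp [xi_apply_of_trivialAbove _ hx])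
    · exact xi_of_not_trivialAbove _ hx
  map_mul' h h' := by
    refine Subtype.ext (Equiv.ext fun x => ?_)
    change xi H l (h * h') x = xi H l h (xi H l h' x)
    by_cases hx : TrivialAbove l x
    · refine Subtype.ext ?_
      rw [xi_apply_of_trivialAbove _ hx, xi_apply_of_trivialAbove _ ((trivialAbove_xi_iff h').2 hx),
        xi_apply_of_trivialAbove _ hx]
      simp [mul_assoc]
    · rw [xi_of_not_trivialAbove _ hx, xi_of_not_trivialAbove _ hx, xi_of_not_trivialAbove _ hx]

lemma xiHom_smul (l : Λ) (h : H l) (x : S Λ H) : xiHom l h • x = xi H l h x := rfl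

theorem Wr.induction {P : Wr Λ H → Prop} (one : P 1) (xi : ∀ l (h : H l), P (xiHom l h))
    (mul : ∀ a b, P a → P b → P (a * b)) (g : Wr Λ H) : P g := by
  have hgen : Subgroup.closure (Subtype.val ⁻¹' {e | ∃ (l : Λ) (h : H l), e = GW.xi H l h}) =
      (⊤ : Subgroup (Wr Λ H)) :=
    Subgroup.closure_closure_coe_preimage
  have hg : g ∈ Subgroup.closure (Subtype.val ⁻¹' {e | ∃ (l : Λ) (h : H l), e = GW.xi H l h}) :=
    hgen ▸ Subgroup.mem_top g
  induction hg using Subgroup.closure_induction'' with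
  | mem x hx =>
    obtain ⟨l, h, hx⟩ := hx
    exact (Subtype.ext hx : x = xiHom l h) ▸ xi l h
  | inv_mem x hx =>
    obtain ⟨l, h, hx⟩ := hx
    exact ((Subtype.ext hx : x = xiHom l h) ▸ map_inv (xiHom l) h) ▸ xi l h⁻¹
  | one => exact one
  | mul x y _ _ hx hy => exact mul x y hx hy

def movedCoords (g : Wr Λ H) : Set Λ := {l | ∃ x : S Λ H, (g • x).1 l ≠ x.1 l}

section MovedCoords

variable {g : Wr Λ H} {l : Λ}

lemma notMem_movedCoords : l ∉ movedCoords g ↔ ∀ x : S Λ H, (g • x).1 l = x.1 l := by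
  simp [movedCoords]

lemma mem_D_iff {Γ : Set Λ} : g ∈ D H Γ ↔ movedCoords g ⊆ Γ := by
  refine ⟨fun hg l hl => ?_, fun hg x l hl => notMem_movedCoords.1 (fun hmem => hl (hg hmem)) x⟩
  by_contra hlΓ
  exact notMem_movedCoords.2 (fun x => hg x l hlΓ) hl

lemma eq_one_of_movedCoords_eq_empty (hg : movedCoords g = ∅) : g = 1 :=
  Subtype.ext <| Equiv.ext fun x => Subtype.ext <| funext fun l =>
    notMem_movedCoords.1 (hg ▸ Set.notMem_empty l) x

lemma movedCoords_inv (g : Wr Λ H) : movedCoords g⁻¹ = movedCoords g := by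
  suffices ∀ g : Wr Λ H, movedCoords g⁻¹ ⊆ movedCoords g from
    (this g).antisymm (by simpa using this g⁻¹)
  intro g l hl
  by_contra hfix
  obtain ⟨x, hx⟩ := hl
  exact hx (by simpa using (notMem_movedCoords.1 hfix (g⁻¹ • x)).symm)

lemma movedCoords_mul_subset (a b : Wr Λ H) :
    movedCoords (a * b) ⊆ movedCoords a ∪ movedCoords b := by
  intro l hl
  by_contra hab
  simp only [Set.mem_union, not_or, notMem_movedCoords] at hab
  obtain ⟨x, hx⟩ := hl
  exact hx (by rw [mul_smul, hab.1, hab.2])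

lemma movedCoords_xiHom_subset (l : Λ) (h : H l) : movedCoords (xiHom l h) ⊆ {l} := by
  rintro m ⟨x, hx⟩
  by_contra hm
  exact hx (xi_apply_ne h x hm)

lemma movedCoords_commutatorElement_subset (a b : Wr Λ H) :
    movedCoords ⁅a, b⁆ ⊆ movedCoords a ∪ movedCoords b := by
  intro l hl
  rw [commutatorElement_def] at hl
  rcases movedCoords_mul_subset _ _ hl with hl | hl
  · rcases movedCoords_mul_subset _ _ hl with hl | hl
    · rcases movedCoords_mul_subset _ _ hl with hl | hl
      exacts [Or.inl hl, Or.inr hl]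
    · exact Or.inl (movedCoords_inv a ▸ hl)
  · exact Or.inr (movedCoords_inv b ▸ hl)

lemma movedCoords_finite (g : Wr Λ H) : (movedCoords g).Finite := by
  induction g using Wr.induction with
  | one => simp [movedCoords]
  | xi l h => exact (Set.finite_singleton l).subset (movedCoords_xiHom_subset l h)
  | mul a b ha hb => exact (ha.union hb).subset (movedCoords_mul_subset a b)

end MovedCoords

def factor (g : Wr Λ H) (l : Λ) (x : S Λ H) : H l := (g • x).1 l * (x.1 l)⁻¹

lemma smul_apply_eq_factor_mul (g : Wr Λ H) (l : Λ) (x : S Λ H) :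
    (g • x).1 l = factor g l x * x.1 l := by
  simp [factor]

lemma factor_mul (a b : Wr Λ H) (l : Λ) (x : S Λ H) :
    factor (a * b) l x = factor a l (b • x) * factor b l x := by
  simp [factor, mul_smul, mul_assoc]

lemma factor_xiHom_self {l : Λ} (h : H l) (x : S Λ H) :
    factor (xiHom l h) l x = if TrivialAbove l x then h else 1 := by
  by_cases hx : TrivialAbove l x
  · simp [factor, xiHom_smul, xi_apply_of_trivialAbove h hx, hx]
  · simp [factor, xiHom_smul, xi_of_not_trivialAbove h hx, hx]

lemma factor_xiHom_of_ne {ν l : Λ} (hne : ν ≠ l) (h : H ν) (x : S Λ H) :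
    factor (xiHom ν h) l x = 1 := by
  simp [factor, xiHom_smul, xi_apply_ne h x hne.symm]

theorem factor_congr (g : Wr Λ H) {l : Λ} {x y : S Λ H} (hxy : ∀ η, l < η → x.1 η = y.1 η) :
    factor g l x = factor g l y := by
  induction g using Wr.induction generalizing l x y with
  | one => simp [factor]
  | xi ν h =>
    rcases eq_or_ne ν l with rfl | hne
    · have hxy' : TrivialAbove ν x ↔ TrivialAbove ν y :=
        forall₂_congr fun η hη => by rw [hxy η hη]
      simp only [factor_xiHom_self, hxy']
    · rw [factor_xiHom_of_ne hne, factor_xiHom_of_ne hne]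
  | mul a b ha hb =>
    rw [factor_mul, factor_mul, hb hxy, ha fun η hη => ?_]
    rw [smul_apply_eq_factor_mul, smul_apply_eq_factor_mul,
      hb fun ζ hζ => hxy ζ (hη.trans hζ), hxy η hη]

lemma smul_apply_congr (g : Wr Λ H) {l : Λ} {x y : S Λ H} (hxy : ∀ η, l ≤ η → x.1 η = y.1 η) :
    (g • x).1 l = (g • y).1 l := by
  rw [smul_apply_eq_factor_mul, smul_apply_eq_factor_mul,
    factor_congr g fun η hη => hxy η hη.le, hxy l le_rfl]

lemma D_normal {Γ : Set Λ} (hΓ : ∀ ⦃g l : Λ⦄, g ∈ Γ → l ≤ g → l ∈ Γ) : (D H Γ).Normal := by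
  refine ⟨fun g hg u x l hl => ?_⟩
  change (u • g • u⁻¹ • x).1 l = x.1 l
  rw [smul_apply_congr u (x := g • u⁻¹ • x) (y := u⁻¹ • x)
    fun η hη => hg _ η fun hηΓ => hl (hΓ hηΓ hη), smul_inv_smul]

lemma D_inf_D_compl_eq_bot (Γ : Set Λ) : D H Γ ⊓ D H Γᶜ = ⊥ := by
  refine eq_bot_iff.2 fun g hg => eq_one_of_movedCoords_eq_empty ?_
  rw [Subgroup.mem_inf, mem_D_iff, mem_D_iff] at hg
  exact Set.subset_empty_iff.1 fun l hl => hg.2 hl (hg.1 hl)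

lemma sup_D_compl_eq_top {L : Subgroup (Wr Λ H)} {Γ : Set Λ}
    (hL : ∀ l ∈ Γ, ∀ h : H l, xiHom l h ∈ L) : L ⊔ D H Γᶜ = ⊤ := by
  refine (Subgroup.eq_top_iff' _).2 fun g => ?_
  induction g using Wr.induction with
  | one => exact one_mem _
  | xi l h =>
    by_cases hl : l ∈ Γ
    · exact Subgroup.mem_sup_left (hL l hl h)
    · refine Subgroup.mem_sup_right (mem_D_iff.2 ((movedCoords_xiHom_subset l h).trans ?_))
      simpa using hl
  | mul a b ha hb => exact mul_mem ha hb

lemma exists_smul_one_eq (x : S Λ H) :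
    ∃ w : Wr Λ H, movedCoords w ⊆ supp x.1 ∧ w • (1 : S Λ H) = x := by
  induction hn : (supp x.1).ncard generalizing x with
  | zero =>
    have hx : x = 1 := Subtype.ext <| funext fun η => by
      by_contra hη
      exact ((Set.ncard_eq_zero x.2).1 hn ▸ hη : η ∈ (∅ : Set Λ))
    exact ⟨1, by simp [movedCoords], hx ▸ one_smul _ _⟩
  | succ n ih =>
    obtain ⟨ν, hν⟩ := x.2.exists_maximal (Set.nonempty_of_ncard_ne_zero (hn ▸ n.succ_ne_zero))
    have hx' : supp (Function.update x.1 ν 1) = supp x.1 \ {ν} := supp_update_one x.1 ν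
    obtain ⟨w, hw, hwx⟩ := ih ⟨Function.update x.1 ν 1, hx' ▸ x.2.sdiff⟩
      (by rw [hx', Set.ncard_sdiff_singleton_of_mem hν.prop, hn, Nat.add_sub_cancel])
    have htriv : TrivialAbove ν (w • (1 : S Λ H)) := fun η hη => by
      rw [hwx]
      change Function.update x.1 ν 1 η = 1
      rw [Function.update_of_ne hη.ne']
      by_contra hne
      exact hη.not_ge (hν.le_of_ge hne hη.le)
    refine ⟨xiHom ν (x.1 ν) * w, ?_, ?_⟩
    · refine (movedCoords_mul_subset _ _).trans (Set.union_subset ?_ ?_)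
      · exact (movedCoords_xiHom_subset _ _).trans (Set.singleton_subset_iff.2 hν.prop)
      · exact hw.trans (hx'.trans_subset Set.sdiff_subset)
    · refine Subtype.ext ?_
      rw [mul_smul, xiHom_smul, xi_apply_of_trivialAbove _ htriv, hwx]
      simp

lemma exists_conj_smul_one_apply_ne_one {n : Wr Λ H} {l : Λ} (hl : l ∈ movedCoords n) :
    ∃ w : Wr Λ H, movedCoords w ⊆ Set.Ioi l ∧ ((w⁻¹ * n * w) • (1 : S Λ H)).1 l ≠ 1 := by
  obtain ⟨x, hx⟩ := hl
  set y := restrictTo (Set.Ioi l) x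
  obtain ⟨w, hw, hwy⟩ := exists_smul_one_eq y
  have hwl : movedCoords w ⊆ Set.Ioi l := hw.trans (supp_restrictTo_subset _ x)
  have hyl : y.1 l = 1 := Set.piecewise_eq_of_notMem _ _ _ (lt_irrefl l)
  have hfactor : factor n l y = factor n l x :=
    factor_congr n fun η hη => Set.piecewise_eq_of_mem _ _ _ hη
  refine ⟨w, hwl, ?_⟩
  rw [mul_smul, mul_smul, hwy,
    notMem_movedCoords.1 (fun h => lt_irrefl l (hwl (movedCoords_inv w ▸ h))),
    smul_apply_eq_factor_mul, hyl, mul_one, hfactor]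
  intro h1
  exact hx (by rw [smul_apply_eq_factor_mul, h1, one_mul])

lemma movedCoords_commutatorElement_xiHom_subset {m : Wr Λ H} {l : Λ}
    (hm : ∀ μ ∈ movedCoords m, ¬ μ < l) (k : H l) : movedCoords ⁅m, xiHom l k⁆ ⊆ {l} := by
  intro ρ hρ
  by_contra hρl
  refine notMem_movedCoords.2 (fun x => ?_) hρ
  rw [commutatorElement_def, ← map_inv, mul_smul, mul_smul, mul_smul]
  set z := m⁻¹ • xiHom l k⁻¹ • x
  have hx : (xiHom l k⁻¹ • x).1 ρ = x.1 ρ := xi_apply_ne _ x hρl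
  by_cases hρ_lt : ρ < l
  · have hfix := notMem_movedCoords.1 (fun h => hm ρ h hρ_lt)
    have hfix' := notMem_movedCoords.1 (fun h => hm ρ (movedCoords_inv m ▸ h) hρ_lt)
    rw [hfix, xiHom_smul, xi_apply_ne _ _ hρl, hfix', hx]
  · rw [smul_apply_congr m (x := xiHom l k • z) (y := z) fun η hη => xi_apply_ne k z fun he =>
      hρ_lt (lt_of_le_of_ne (he ▸ hη) hρl), smul_inv_smul, hx]

lemma commutatorElement_xiHom_smul_one_apply_ne_one (m : Wr Λ H) {l : Λ} {k : H l}
    (hk : ⁅(m • (1 : S Λ H)).1 l, k⁆ ≠ 1) : (⁅m, xiHom l k⁆ • (1 : S Λ H)).1 l ≠ 1 := by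
  set a := (m • (1 : S Λ H)).1 l
  have hfactor : ∀ v : S Λ H, TrivialAbove l v → factor m l v = a := fun v hv => by
    rw [factor_congr m (y := 1) fun η hη => hv η hη]
    simp [factor, a]
  rw [commutatorElement_def, ← map_inv, mul_smul, mul_smul, mul_smul]
  set y := xiHom l k⁻¹ • (1 : S Λ H)
  have hyl : y.1 l = k⁻¹ := by
    simp [y, xiHom_smul, xi_apply_of_trivialAbove _ (trivialAbove_one l)]
  set z := m⁻¹ • y
  -- The value is `⁅a, k⁆` or `k⁻¹`, according as `z` is trivial above `l` or not.
  by_cases hz : TrivialAbove l z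
  · have hzl : z.1 l = a⁻¹ * k⁻¹ := by
      have := smul_apply_eq_factor_mul m l z
      rw [smul_inv_smul, hyl, hfactor z hz] at this
      rw [this]
      group
    rw [smul_apply_eq_factor_mul, hfactor (xiHom l k • z) ((trivialAbove_xi_iff k).2 hz),
      xiHom_smul, xi_apply_of_trivialAbove _ hz, Function.update_self, hzl]
    simpa [commutatorElement_def, mul_assoc] using hk
  · have hk1 : k ≠ 1 := by
      rintro rfl
      exact hk (commutatorElement_one_right a)
    rw [xiHom_smul, xi_of_not_trivialAbove _ hz, smul_inv_smul, hyl]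
    exact inv_ne_one.2 hk1

lemma smul_eq_xiHom_smul_of_movedCoords_subset {c : Wr Λ H} {l : Λ} (hc : movedCoords c ⊆ {l})
    {x : S Λ H} (hx : TrivialAbove l x) : c • x = xiHom l ((c • (1 : S Λ H)).1 l) • x := by
  refine Subtype.ext (funext fun η => ?_)
  rcases eq_or_ne η l with rfl | hη
  · rw [xiHom_smul, xi_apply_of_trivialAbove _ hx, Function.update_self, smul_apply_eq_factor_mul,
      factor_congr c (y := 1) fun ζ hζ => hx ζ hζ]
    simp [factor]
  · rw [xiHom_smul, xi_apply_ne _ _ hη, notMem_movedCoords.1 (fun h => hη (hc h))]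

lemma commutatorElement_xiHom_of_movedCoords_subset {c : Wr Λ H} {l : Λ}
    (hc : movedCoords c ⊆ {l}) (k : H l) :
    ⁅c, xiHom l k⁆ = xiHom l ⁅(c • (1 : S Λ H)).1 l, k⁆ := by
  set a := (c • (1 : S Λ H)).1 l
  set c' := c * (xiHom l a)⁻¹
  -- `c'` fixes the points trivial above `l`, and `ξ` fixes all the others.
  have hcomm : ∀ h : H l, Commute c' (xiHom l h) := fun h => by
    have hdisj : (c' : Equiv.Perm (S Λ H)).Disjoint (xiHom l h) := fun x => by
      by_cases hx : TrivialAbove l x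
      · left
        change c • (xiHom l a)⁻¹ • x = x
        rw [← map_inv, smul_eq_xiHom_smul_of_movedCoords_subset hc (x := xiHom l a⁻¹ • x)
          ((trivialAbove_xi_iff _).2 hx),
          smul_smul, ← map_mul, mul_inv_cancel, map_one, one_smul]
      · exact Or.inr (xi_of_not_trivialAbove h hx)
    exact Subtype.ext hdisj.commute
  have hc' : c = c' * xiHom l a := by simp [c']
  calc ⁅c, xiHom l k⁆ = c' * ⁅xiHom l a, xiHom l k⁆ * c'⁻¹ := by
        simp only [hc', commutatorElement_def, mul_inv_rev, mul_assoc, (hcomm k).inv_inv.eq]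
    _ = xiHom l ⁅a, k⁆ := by rw [← map_commutatorElement]; exact (hcomm _).mul_inv_cancel

lemma commutatorElement_xiHom_xiHom_smul_one_apply {l ν : Λ} (hlν : l < ν) (k : H l) {h : H ν}
    (hh : h ≠ 1) : (⁅xiHom l k, xiHom ν h⁆ • (1 : S Λ H)).1 l = k := by
  rw [commutatorElement_def, ← map_inv, ← map_inv, mul_smul, mul_smul, mul_smul]
  set p := xiHom ν h⁻¹ • (1 : S Λ H)
  have hpν : p.1 ν = h⁻¹ := by
    simp [p, xiHom_smul, xi_apply_of_trivialAbove _ (trivialAbove_one ν)]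
  have hp : xiHom ν h • p = 1 := by
    rw [smul_smul, ← map_mul, mul_inv_cancel, map_one, one_smul]
  have hpl : ¬ TrivialAbove l p := fun hT => hh (inv_eq_one.1 (hpν ▸ hT ν hlν))
  rw [xiHom_smul l k⁻¹, xi_of_not_trivialAbove _ hpl, hp, xiHom_smul,
    xi_apply_of_trivialAbove _ (trivialAbove_one l)]
  simp

theorem xiHom_mem_of_minimal {l : Λ} [IsSimpleGroup (H l)] (hna : ∃ a b : H l, a * b ≠ b * a)
    {N : Subgroup (Wr Λ H)} [N.Normal] {n : Wr Λ H} (hn : n ∈ N)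
    (hl : Minimal (· ∈ movedCoords n) l) (h : H l) : xiHom l h ∈ N := by
  have comm_mem : ∀ {a : Wr Λ H}, a ∈ N → ∀ b, ⁅a, b⁆ ∈ N := fun ha b =>
    Subgroup.commutator_le_left N ⊤ (Subgroup.commutator_mem_commutator ha (Subgroup.mem_top b))
  obtain ⟨w, hw, hm⟩ := exists_conj_smul_one_apply_ne_one hl.prop
  set m := w⁻¹ * n * w
  have hm_below : ∀ μ ∈ movedCoords m, ¬ μ < l := fun μ hμ hμl => by
    rcases movedCoords_mul_subset _ _ hμ with hμ | hμ
    · rcases movedCoords_mul_subset _ _ hμ with hμ | hμ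
      · exact (hw (movedCoords_inv w ▸ hμ)).asymm hμl
      · exact hl.not_lt hμ hμl
    · exact (hw hμ).asymm hμl
  obtain ⟨k, hk⟩ := IsSimpleGroup.exists_commutatorElement_ne_one hna hm
  set c := ⁅m, xiHom l k⁆
  have hcN : c ∈ N := comm_mem (Subgroup.Normal.conj_mem' inferInstance n hn w) _
  have hc : movedCoords c ⊆ {l} := movedCoords_commutatorElement_xiHom_subset hm_below k
  obtain ⟨k', hk'⟩ := IsSimpleGroup.exists_commutatorElement_ne_one hna
    (commutatorElement_xiHom_smul_one_apply_ne_one m hk)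
  have hb : xiHom l ⁅(c • (1 : S Λ H)).1 l, k'⁆ ∈ N :=
    commutatorElement_xiHom_of_movedCoords_subset hc k' ▸ comm_mem hcN _
  have htop : N.comap (xiHom l) = ⊤ :=
    (IsSimpleGroup.eq_bot_or_eq_top_of_normal _
      (Subgroup.Normal.comap inferInstance _)).resolve_left
      fun hbot => hk' (Subgroup.mem_bot.1 (hbot ▸ hb))
  exact (htop ▸ Subgroup.mem_top h : h ∈ N.comap (xiHom l))

theorem xiHom_mem_of_lt {l ν : Λ} [IsSimpleGroup (H l)] [Nontrivial (H ν)]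
    (hna : ∃ a b : H l, a * b ≠ b * a) {N : Subgroup (Wr Λ H)} [N.Normal] (hlν : l < ν)
    (hν : ∀ h : H ν, xiHom ν h ∈ N) (h : H l) : xiHom l h ∈ N := by
  obtain ⟨k, hk⟩ := exists_ne (1 : H l)
  obtain ⟨h', hh'⟩ := exists_ne (1 : H ν)
  set c := ⁅xiHom l k, xiHom ν h'⁆
  have hcN : c ∈ N :=
    Subgroup.commutator_le_right ⊤ N
      (Subgroup.commutator_mem_commutator (Subgroup.mem_top _) (hν h'))
  have hc : movedCoords c ⊆ {l, ν} := (movedCoords_commutatorElement_subset _ _).trans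
    (Set.union_subset_union (movedCoords_xiHom_subset l k) (movedCoords_xiHom_subset ν h'))
  have hlc : l ∈ movedCoords c :=
    ⟨1, by rw [commutatorElement_xiHom_xiHom_smul_one_apply hlν k hh']; exact hk⟩
  refine xiHom_mem_of_minimal hna (n := c) hcN ⟨hlc, fun μ hμ hμl => ?_⟩ h
  rcases hc hμ with rfl | rfl
  exacts [le_rfl, absurd hμl hlν.not_ge]

theorem inf_D_compl_eq_bot [∀ l, IsSimpleGroup (H l)] (hna : ∀ l : Λ, ∃ a b : H l, a * b ≠ b * a)
    (N : Subgroup (Wr Λ H)) [N.Normal] : N ⊓ D H {l | ∀ h : H l, xiHom l h ∈ N}ᶜ = ⊥ := by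
  refine eq_bot_iff.2 fun u hu => Subgroup.mem_bot.2 ?_
  by_contra hu1
  obtain ⟨l, hl⟩ := (movedCoords_finite u).exists_minimal
    (Set.nonempty_iff_ne_empty.2 fun h => hu1 (eq_one_of_movedCoords_eq_empty h))
  exact mem_D_iff.1 hu.2 hl.prop fun h => xiHom_mem_of_minimal (hna l) hu.1 hl h

end GW

/-- Silcock: if every `H_λ` is a nonabelian simple group, then every normal
subgroup of `H_Λ = Wr_{λ∈Λ} H_λ` equals `D_Γ` for some downward closed `Γ ⊆ Λ`. -/
theorem normal_subgroup_eq_d {Λ : Type*} [PartialOrder Λ] (H : Λ → Type*)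
    [∀ l, Group (H l)] [∀ l, IsSimpleGroup (H l)]
    (hna : ∀ l : Λ, ∃ a b : H l, a * b ≠ b * a)
    (N : Subgroup ↥(GW.Wr Λ H)) (hN : N.Normal) :
    ∃ Γ : Set Λ, (∀ ⦃g l : Λ⦄, g ∈ Γ → l ≤ g → l ∈ Γ) ∧ N = GW.D H Γ := by
  set Γ : Set Λ := {l | ∀ h : H l, GW.xiHom (H := H) l h ∈ N}
  have hΓ : ∀ ⦃g l : Λ⦄, g ∈ Γ → l ≤ g → l ∈ Γ := fun g l hg hlg => by
    rcases hlg.eq_or_lt with rfl | hlt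
    exacts [hg, GW.xiHom_mem_of_lt (hna l) hlt hg]
  have := GW.D_normal (H := H) hΓ
  have hsup : N ⊓ GW.D H Γ ⊔ GW.D H Γᶜ = ⊤ := GW.sup_D_compl_eq_top fun l hl h =>
    ⟨hl h, GW.mem_D_iff.2 ((GW.movedCoords_xiHom_subset l h).trans (Set.singleton_subset_iff.2 hl))⟩
  have hcancel : ∀ K : Subgroup (GW.Wr Λ H), N ⊓ GW.D H Γ ≤ K → K ⊓ GW.D H Γᶜ = ⊥ →
      ∀ g ∈ K, g ∈ N ⊓ GW.D H Γ := by
    intro K hK hbot g hg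
    obtain ⟨d, hd, u, hu, rfl⟩ := Subgroup.mem_sup_of_normal_left.1 (hsup ▸ Subgroup.mem_top g)
    have hu1 : u = 1 := by
      rw [← Subgroup.mem_bot, ← hbot]
      exact ⟨(K.mul_mem_cancel_left (hK hd)).1 hg, hu⟩
    rwa [hu1, mul_one]
  exact ⟨Γ, hΓ, le_antisymm
    (fun g hg => (hcancel N inf_le_left (GW.inf_D_compl_eq_bot hna N) g hg).2)
    fun g hg => (hcancel _ inf_le_right (GW.D_inf_D_compl_eq_bot Γ) g hg).1⟩
end

section
/- Let W be a countable linear order that is order-isomorphic to a proper initial segment of itself, i.e., there is a proper downward closed subset L ⊊ W with L order-isomorphic to W. Then G_W = Wr_{λ∈W^op} H_λ (every H_λ equal to A₅) is not Hopfian: there is a surjective group homomorphism from G_W to G_W that is not injective. -/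
/-!
For an order embedding `φ : Λ' ↪ Λ` with upward closed range, restricting elements of `S` to the
coordinates in the range induces a surjective homomorphism `Wr_{λ∈Λ} H_λ → Wr_{μ∈Λ'} H_{φ μ}`:
for `λ` in the range, the condition in `ξ_h` only looks at coordinates in the range, and for `λ`
outside it `ξ_h` does not touch them, so it lies in the kernel. An isomorphism `L ≃ W` onto a
proper initial segment is such an embedding `W^op ↪ W^op`, whose range `L` misses some `λ`; the
nontrivial `ξ_h` at `λ` then shows that the restriction endomorphism of `G_W` is not injective.
-/

open scoped Classical

noncomputable section

namespace GW

open Equiv Function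

section Comap

variable {Λ Λ' : Type*} {H : Λ → Type*} [∀ l, One (H l)] {φ : Λ' → Λ}

def S.comap (hφ : Injective φ) (x : S Λ H) : S Λ' (fun m => H (φ m)) :=
  ⟨fun m => x.1 (φ m), x.2.preimage hφ.injOn⟩

/-- The value at `φ m` is transported from `H (φ m)` to `H l` along `φ m = l`. -/
def extendFun (φ : Λ' → Λ) (y : ∀ m, H (φ m)) (l : Λ) : H l :=
  if h : ∃ m, φ m = l then cast (congrArg H h.choose_spec) (y h.choose) else 1

lemma extendFun_apply_self (hφ : Injective φ) (y : ∀ m, H (φ m)) (m : Λ') :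
    extendFun φ y (φ m) = y m := by
  have hcast : ∀ m' (e : φ m' = φ m), cast (congrArg H e) (y m') = y m := by
    rintro m' e
    obtain rfl := hφ e
    rfl
  unfold extendFun
  rw [dif_pos ⟨m, rfl⟩]
  exact hcast _ (Exists.choose_spec (p := fun m' => φ m' = φ m) ⟨m, rfl⟩)

lemma extendFun_of_notMem_range (y : ∀ m, H (φ m)) {l : Λ} (hl : l ∉ Set.range φ) :
    extendFun φ y l = 1 :=
  dif_neg hl

def S.extend (hφ : Injective φ) (y : S Λ' (fun m => H (φ m))) : S Λ H :=
  ⟨extendFun φ y.1, (y.2.image φ).subset <| by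
    intro l hl
    by_cases hrange : l ∈ Set.range φ
    · obtain ⟨m, rfl⟩ := hrange
      refine ⟨m, ?_, rfl⟩
      rwa [supp, Set.mem_ofPred_eq, extendFun_apply_self hφ] at hl
    · exact absurd (extendFun_of_notMem_range y.1 hrange) hl⟩

lemma S.comap_surjective (hφ : Injective φ) : Surjective (S.comap (H := H) hφ) :=
  fun y => ⟨S.extend hφ y, Subtype.ext <| funext <| extendFun_apply_self hφ y.1⟩

end Comap

section Restriction

variable {Λ Λ' : Type*} [PartialOrder Λ] [PartialOrder Λ'] (H : Λ → Type*) [∀ l, Group (H l)]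
  (φ : Λ' ↪o Λ)

lemma xi_ne_one {l : Λ} {h : H l} (hh : h ≠ 1) : xi H l h ≠ 1 := by
  intro hxi
  have hfin : (supp (1 : ∀ m, H m)).Finite := by simp [supp]
  have := congrArg (fun p : Perm (S Λ H) => (p ⟨1, hfin⟩).1 l) hxi
  exact hh (by simpa [xi, xiFun] using this)

/-- As the range of `φ` is upward closed, the condition `x_η = 1 for all η > λ` in `ξ_h` only
involves coordinates in the range. -/
lemma xiFun_comp (hφ : IsUpperSet (Set.range φ)) (l : Λ') (h : H (φ l)) (x : ∀ m, H m) :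
    (fun m => xiFun H (φ l) h x (φ m)) = xiFun (fun m => H (φ m)) l h (fun m => x (φ m)) := by
  funext m
  rcases eq_or_ne m l with rfl | hne
  · have hcond : (∀ n, φ m < n → x n = 1) ↔ ∀ n, m < n → x (φ n) = 1 := by
      refine ⟨fun hc n hn => hc _ (φ.lt_iff_lt.2 hn), fun hc n hn => ?_⟩
      obtain ⟨n, rfl⟩ := hφ hn.le ⟨m, rfl⟩
      exact hc n (φ.lt_iff_lt.1 hn)
    simp only [xiFun, Function.update_self, hcond]
  · rw [xiFun_apply_ne _ _ _ _ hne, xiFun_apply_ne _ _ _ _ (φ.injective.ne hne)]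

def restrictionGraph : Subgroup (Perm (S Λ H) × Perm (S Λ' fun m => H (φ m))) where
  carrier := {p | ∀ x, S.comap φ.injective (p.1 x) = p.2 (S.comap φ.injective x)}
  one_mem' _ := rfl
  mul_mem' {p q} hp hq x := by
    change S.comap _ (p.1 (q.1 x)) = p.2 (q.2 (S.comap _ x))
    rw [hp, hq]
  inv_mem' {p} hp x := by
    change S.comap _ (p.1⁻¹ x) = p.2⁻¹ (S.comap _ x)
    rw [Perm.eq_inv_iff_eq, ← hp, Perm.coe_inv, apply_symm_apply]

lemma eq_of_mem_restrictionGraph {g : Perm (S Λ H)} {g₁ g₂ : Perm (S Λ' fun m => H (φ m))}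
    (h₁ : (g, g₁) ∈ restrictionGraph H φ) (h₂ : (g, g₂) ∈ restrictionGraph H φ) : g₁ = g₂ :=
  Equiv.ext <| (S.comap_surjective φ.injective).forall.2 fun x => (h₁ x).symm.trans (h₂ x)

lemma xi_mem_restrictionGraph (hφ : IsUpperSet (Set.range φ)) (l : Λ') (h : H (φ l)) :
    (xi H (φ l) h, xi (fun m => H (φ m)) l h) ∈ restrictionGraph H φ := fun x =>
  Subtype.ext (xiFun_comp H φ hφ l h x.1)

lemma xi_one_mem_restrictionGraph {k : Λ} (hk : k ∉ Set.range φ) (h : H k) :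
    (xi H k h, 1) ∈ restrictionGraph H φ := fun x =>
  Subtype.ext <| funext fun m => xiFun_apply_ne H k h x.1 fun hm => hk ⟨m, hm⟩

lemma exists_restriction (hφ : IsUpperSet (Set.range φ)) {g : Perm (S Λ H)} (hg : g ∈ Wr Λ H) :
    ∃ g' ∈ Wr Λ' (fun m => H (φ m)), (g, g') ∈ restrictionGraph H φ := by
  suffices Wr Λ H ≤ (restrictionGraph H φ ⊓ (⊤ : Subgroup _).prod (Wr Λ' _)).map
      (MonoidHom.fst _ _) by
    obtain ⟨⟨g, g'⟩, ⟨hgraph, -, hg'⟩, rfl⟩ := this hg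
    exact ⟨g', hg', hgraph⟩
  refine (Subgroup.closure_le _).2 ?_
  rintro _ ⟨l, h, rfl⟩
  by_cases hl : l ∈ Set.range φ
  · obtain ⟨m, rfl⟩ := hl
    exact ⟨_, ⟨xi_mem_restrictionGraph H φ hφ m h, trivial, Subgroup.subset_closure ⟨m, h, rfl⟩⟩,
      rfl⟩
  · exact ⟨_, ⟨xi_one_mem_restrictionGraph H φ hl h, trivial, one_mem _⟩, rfl⟩

lemma exists_lift (hφ : IsUpperSet (Set.range φ)) {g' : Perm (S Λ' fun m => H (φ m))}
    (hg' : g' ∈ Wr Λ' (fun m => H (φ m))) : ∃ g ∈ Wr Λ H, (g, g') ∈ restrictionGraph H φ := by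
  suffices Wr Λ' _ ≤ (restrictionGraph H φ ⊓ (Wr Λ H).prod ⊤).map (MonoidHom.snd _ _) by
    obtain ⟨⟨g, g'⟩, ⟨hgraph, hg, -⟩, rfl⟩ := this hg'
    exact ⟨g, hg, hgraph⟩
  refine (Subgroup.closure_le _).2 ?_
  rintro _ ⟨m, h, rfl⟩
  exact ⟨_, ⟨xi_mem_restrictionGraph H φ hφ m h, Subgroup.subset_closure ⟨φ m, h, rfl⟩, trivial⟩,
    rfl⟩

def restrictHom (hφ : IsUpperSet (Set.range φ)) : Wr Λ H →* Wr Λ' (fun m => H (φ m)) where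
  toFun g := ⟨(exists_restriction H φ hφ g.2).choose, (exists_restriction H φ hφ g.2).choose_spec.1⟩
  map_one' := Subtype.ext <| eq_of_mem_restrictionGraph H φ
    (exists_restriction H φ hφ (one_mem _)).choose_spec.2 (one_mem _)
  map_mul' g₁ g₂ := Subtype.ext <| eq_of_mem_restrictionGraph H φ
    (exists_restriction H φ hφ (mul_mem g₁.2 g₂.2)).choose_spec.2
    (mul_mem (exists_restriction H φ hφ g₁.2).choose_spec.2
      (exists_restriction H φ hφ g₂.2).choose_spec.2)

variable {H φ} (hφ : IsUpperSet (Set.range φ))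

lemma restrictHom_mem_restrictionGraph (g : Wr Λ H) :
    ((g : Perm (S Λ H)), (restrictHom H φ hφ g : Perm _)) ∈ restrictionGraph H φ :=
  (exists_restriction H φ hφ g.2).choose_spec.2

lemma restrictHom_surjective : Surjective (restrictHom H φ hφ) := by
  rintro ⟨g', hg'⟩
  obtain ⟨g, hg, hgraph⟩ := exists_lift H φ hφ hg'
  exact ⟨⟨g, hg⟩, Subtype.ext <|
    eq_of_mem_restrictionGraph H φ (restrictHom_mem_restrictionGraph hφ ⟨g, hg⟩) hgraph⟩

lemma restrictHom_not_injective {k : Λ} (hk : k ∉ Set.range φ) [Nontrivial (H k)] :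
    ¬ Injective (restrictHom H φ hφ) := by
  obtain ⟨h, hh⟩ := exists_ne (1 : H k)
  let ξ : Wr Λ H := ⟨xi H k h, Subgroup.subset_closure ⟨k, h, rfl⟩⟩
  have hξ : restrictHom H φ hφ ξ = 1 := Subtype.ext <| eq_of_mem_restrictionGraph H φ
    (restrictHom_mem_restrictionGraph hφ ξ) (xi_one_mem_restrictionGraph H φ hk h)
  exact fun hinj => xi_ne_one H hh <| congrArg Subtype.val <| hinj (hξ.trans (map_one _).symm)

end Restriction

end GW

end

theorem gw_not_hopfian_general (W : Type*) [LinearOrder W] (L : Set W)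
    (hdc : ∀ ⦃a b : W⦄, a ∈ L → b ≤ a → b ∈ L) (hL : L ≠ Set.univ)
    (hiso : Nonempty (↥L ≃o W)) :
    ∃ f : ↥(GW.Wr Wᵒᵈ (fun _ : Wᵒᵈ => ↥(alternatingGroup (Fin 5)))) →*
          ↥(GW.Wr Wᵒᵈ (fun _ : Wᵒᵈ => ↥(alternatingGroup (Fin 5)))),
      Function.Surjective f ∧ ¬ Function.Injective f := by
  obtain ⟨e⟩ := hiso
  let φ : Wᵒᵈ ↪o Wᵒᵈ :=
    OrderEmbedding.dual (e.symm.toOrderEmbedding.trans (OrderEmbedding.subtype L))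
  have hrange : Set.range φ = L := by
    ext w
    refine ⟨?_, fun hw => ⟨OrderDual.toDual (e ⟨w, hw⟩), ?_⟩⟩
    · rintro ⟨v, rfl⟩
      exact (e.symm v).2
    · exact congrArg Subtype.val (e.symm_apply_apply ⟨w, hw⟩)
  have hupper : IsUpperSet (Set.range φ) := hrange ▸ fun _ _ hab ha => hdc ha hab
  obtain ⟨k, hk⟩ := (Set.ne_univ_iff_exists_notMem L).1 hL
  have : Nontrivial (alternatingGroup (Fin 5)) :=
    alternatingGroup.nontrivial_of_three_le_card (by simp)
  exact ⟨GW.restrictHom _ φ hupper, GW.restrictHom_surjective hupper,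
    GW.restrictHom_not_injective hupper (hrange ▸ hk)⟩

/-- if a countable linear order `W` is order-isomorphic to a proper initial
segment (proper downward closed subset) of itself, then `G_W = Wr_{λ∈W^op} A₅` is not
Hopfian: there is a surjective endomorphism of `G_W` that is not injective. -/
theorem gw_not_hopfian (W : Type*) [LinearOrder W] [Countable W] (L : Set W)
    (hdc : ∀ ⦃a b : W⦄, a ∈ L → b ≤ a → b ∈ L) (hL : L ≠ Set.univ)
    (hiso : Nonempty (↥L ≃o W)) :
    ∃ f : ↥(GW.Wr Wᵒᵈ (fun _ : Wᵒᵈ => ↥(alternatingGroup (Fin 5)))) →*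
          ↥(GW.Wr Wᵒᵈ (fun _ : Wᵒᵈ => ↥(alternatingGroup (Fin 5)))),
      Function.Surjective f ∧ ¬ Function.Injective f :=
  gw_not_hopfian_general W L hdc hL hiso
end

section
/- Let σ and α be ordinals with α < σ. Then the linear order σ · (1 + ℚ) + α — the lexicographic sum of α after the lexicographic product of σ copies indexed by the linear order 1 + ℚ reversed appropriately, i.e., the order type (σ ×ₗ (1 ⊕ₗ ℚ)) ⊕ₗ α where the product is ordered lexicographically with the (1 ⊕ₗ ℚ)-coordinate most significant — is order-isomorphic to a proper initial segment (proper downward closed subset) of itself. -/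
/-!
Take `c = 0` in `1 ⊕ₗ ℚ` and let `e ∈ σ` be the point whose predecessors have order type `α`.
The points of `(1 ⊕ₗ ℚ) ×ₗ σ` below `(c, e)` form `(Iio c ×ₗ σ) ⊕ₗ Iio e`. Since `Iio c` is
`1 ⊕ₗ Iio 0 ≃o 1 ⊕ₗ ℚ` by Cantor's back-and-forth theorem, and `Iio e ≃o α`, this is the whole order
again, so the proper initial segment `Iio (c, e)` is isomorphic to it.
-/

open Set

namespace Sum.Lex

variable {α β γ : Type*}

theorem strictMono_elim [Preorder α] [Preorder β] [Preorder γ] {f : α → γ} {g : β → γ}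
    (hf : StrictMono f) (hg : StrictMono g) (hfg : ∀ a b, f a < g b) :
    StrictMono fun x : α ⊕ₗ β ↦ Sum.elim f g (ofLex x) := by
  rintro (a | b) (a' | b') h
  · exact hf (inl_lt_inl_iff.1 h)
  · exact hfg a b'
  · exact absurd h not_inr_lt_inl
  · exact hg (inr_lt_inr_iff.1 h)

noncomputable def orderIsoIioInl [LinearOrder α] [Preorder β] (a : α) :
    Iio a ≃o Iio (toLex (inl a) : α ⊕ₗ β) :=
  StrictMono.orderIsoOfSurjective (fun x ↦ ⟨toLex (inl x.1), inl_lt_inl_iff.2 x.2⟩)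
    (fun _ _ h ↦ inl_lt_inl_iff.2 h) <| by
      rintro ⟨x, hx⟩
      obtain ⟨x | y, rfl⟩ := toLex.surjective x
      · exact ⟨⟨x, inl_lt_inl_iff.1 hx⟩, rfl⟩
      · exact absurd hx not_inr_lt_inl

noncomputable def orderIsoIioInr [LinearOrder α] [LinearOrder β] (b : β) :
    α ⊕ₗ Iio b ≃o Iio (toLex (inr b) : α ⊕ₗ β) :=
  StrictMono.orderIsoOfSurjective
    (fun x ↦ Sum.elim (fun a ↦ ⟨toLex (inl a), inl_lt_inr _ _⟩)
      (fun y ↦ ⟨toLex (inr y.1), inr_lt_inr_iff.2 y.2⟩) (ofLex x))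
    (strictMono_elim (fun _ _ h ↦ inl_lt_inl_iff.2 h)
      (fun _ _ h ↦ by simpa [← Subtype.coe_lt_coe] using h) fun _ _ ↦ inl_lt_inr _ _) <| by
      rintro ⟨x, hx⟩
      obtain ⟨x | y, rfl⟩ := toLex.surjective x
      · exact ⟨toLex (inl x), rfl⟩
      · exact ⟨toLex (inr ⟨y, inr_lt_inr_iff.1 hx⟩), rfl⟩

end Sum.Lex

namespace Prod.Lex

variable {α β : Type*} [LinearOrder α] [LinearOrder β]

noncomputable def orderIsoIio (a : α) (b : β) :
    (Iio a ×ₗ β) ⊕ₗ Iio b ≃o Iio (toLex (a, b)) :=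
  StrictMono.orderIsoOfSurjective
    (fun x ↦ Sum.elim
      (fun p ↦ ⟨toLex ((ofLex p).1.1, (ofLex p).2), toLex_lt_toLex.2 (.inl (ofLex p).1.2)⟩)
      (fun y ↦ ⟨toLex (a, y.1), toLex_lt_toLex.2 (.inr ⟨rfl, y.2⟩)⟩) (ofLex x))
    (Sum.Lex.strictMono_elim
      (fun p q h ↦ by simpa [← Subtype.coe_lt_coe, Prod.Lex.lt_iff, Subtype.coe_inj] using h)
      (fun y y' h ↦ by simpa [← Subtype.coe_lt_coe, Prod.Lex.lt_iff] using h)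
      (fun p _ ↦ toLex_lt_toLex.2 (.inl (ofLex p).1.2)))
    (by
      rintro ⟨⟨x, y⟩, hxy⟩
      rcases toLex_lt_toLex.1 hxy with hx | ⟨rfl, hy⟩
      · exact ⟨toLex (.inl (toLex (⟨x, hx⟩, y))), rfl⟩
      · exact ⟨toLex (.inr ⟨y, hy⟩), rfl⟩)

end Prod.Lex

noncomputable def orderIsoIioInlProdLex {P P' β γ : Type*} [LinearOrder P] [Preorder P']
    [LinearOrder β] [PartialOrder γ] {c : P} (e : Iio c ≃o P') (f : γ <i β) :
    Iio (toLex (.inl (toLex (c, f.top))) : (P ×ₗ β) ⊕ₗ γ) ≃o (P' ×ₗ β) ⊕ₗ γ :=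
  (Sum.Lex.orderIsoIioInl _).symm.trans <| (Prod.Lex.orderIsoIio _ _).symm.trans <|
    OrderIso.sumLexCongr (Prod.Lex.prodLexCongr e (.refl β)) f.orderIsoIio.symm

/-- for ordinals `α < σ`, the linear order `σ·(1+ℚ) + α` — here realized as
`((1 ⊕ₗ ℚ) ×ₗ σ) ⊕ₗ α`, pairs ordered lexicographically with the `(1 ⊕ₗ ℚ)`-coordinate
most significant, followed by a copy of `α` — is order-isomorphic to a proper initial
segment (proper downward closed subset) of itself. -/
theorem pseudoWellOrder_iso_proper_initial_segment (σ α : Ordinal) (h : α < σ) :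
    ∃ L : Set (((PUnit ⊕ₗ ℚ) ×ₗ σ.ToType) ⊕ₗ α.ToType),
      (∀ ⦃a b : ((PUnit ⊕ₗ ℚ) ×ₗ σ.ToType) ⊕ₗ α.ToType⦄, a ∈ L → b ≤ a → b ∈ L) ∧
      L ≠ Set.univ ∧
      Nonempty (↥L ≃o (((PUnit ⊕ₗ ℚ) ×ₗ σ.ToType) ⊕ₗ α.ToType)) := by
  obtain ⟨f⟩ : Nonempty (α.ToType <i σ.ToType) := Ordinal.type_lt_iff.1 (by simpa using h)
  obtain ⟨e⟩ : Nonempty (Iio (0 : ℚ) ≃o ℚ) := Order.iso_of_countable_dense _ _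
  -- The two occurrences of `PUnit` in the statement live in independent universes.
  have hc := (Sum.Lex.orderIsoIioInr (α := PUnit) 0).symm.trans
    (OrderIso.sumLexCongr (.ofUnique _ PUnit) e)
  exact ⟨_, fun _ _ ha hb ↦ hb.trans_lt ha, fun hL ↦ lt_irrefl _ (hL ▸ mem_univ _ : _ ∈ Iio _),
    ⟨orderIsoIioInlProdLex hc f⟩⟩
end
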